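/- For α ∈ (0,1) and integers n ≥ 3, ∑_{j=2}^{n-1} 1/((j-1)^{3-3α}(n-j)^α) ≤ C·ῆ(n), where ῆ(n) = n^{-α} if α ∈ (0,2/3), ῆ(n) = n^{-2/3} ln(n+1) if α = 2/3, ῆ(n) = n^{-(2-2α)} if α ∈ (2/3,1), and C = C(α) > 0 is a constant independent of n. -/

import Mathlib

/-!
Write `p = 3 - 3α` and `q = α`. Since `(j - 1) + (n - j) = n - 1 ≥ 2n/3`, in every term one of the
two factors is at least `n/3`; freezing that factor at `n/3` bounds the sum by
`3^(p+q) (n^(-q) ∑_{k ≤ n} k^(-p) + n^(-p) ∑_{k ≤ n} k^(-q))`. Comparison with `∫_1^n x^(-s) dx`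
shows that `∑_{k ≤ n} k^(-s)` is bounded for `s > 1`, at most `1 + log n` for `s = 1`, and
`O(n^(1-s))` for `s < 1`; the three regimes of `ῆ` are the three positions of `p` relative to `1`.
-/

open Real Finset

/-- The majorant `ῆ(n)` depending on the range of `α`. -/
noncomputable def etaTilde (α : ℝ) (n : ℕ) : ℝ :=
  if α < 2/3 then (n : ℝ) ^ (-α)
  else if α = 2/3 then (n : ℝ) ^ (-(2/3 : ℝ)) * Real.log ((n : ℝ) + 1)
  else (n : ℝ) ^ (-(2 - 2*α))

noncomputable def powSum (q : ℝ) (n : ℕ) : ℝ := ∑ k ∈ Icc 1 n, (k : ℝ) ^ (-q)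

lemma powSum_nonneg (q : ℝ) (n : ℕ) : 0 ≤ powSum q n := sum_nonneg fun _ _ => by positivity

lemma powSum_mono (q : ℝ) : Monotone (powSum q) := fun _ _ hmn =>
  sum_le_sum_of_subset_of_nonneg (Icc_subset_Icc_right hmn) fun _ _ _ => by positivity

lemma powSum_le_one_add_integral {q : ℝ} (hq : 0 ≤ q) {n : ℕ} (hn : 1 ≤ n) :
    powSum q n ≤ 1 + ∫ x in (1 : ℝ)..n, x ^ (-q) := by
  have hanti : AntitoneOn (fun x : ℝ => x ^ (-q)) (Set.Icc 1 n) := fun x hx y _ hxy =>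
    rpow_le_rpow_of_nonpos (one_pos.trans_le hx.1) hxy (neg_nonpos.2 hq)
  have hsplit : powSum q n = 1 + ∑ i ∈ Ico 1 n, ((i + 1 : ℕ) : ℝ) ^ (-q) := by
    rw [powSum, ← Ico_add_one_right_eq_Icc, sum_eq_sum_Ico_succ_bot (by omega),
      ← sum_Ico_add' (fun k : ℕ => (k : ℝ) ^ (-q))]
    simp
  rw [hsplit]
  gcongr
  simpa using AntitoneOn.sum_le_integral_Ico hn (by simpa using hanti)

lemma integral_rpow_neg_of_ne_one {q : ℝ} (hq : q ≠ 1) {b : ℝ} (hb : 1 ≤ b) :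
    ∫ x in (1 : ℝ)..b, x ^ (-q) = (b ^ (1 - q) - 1) / (1 - q) := by
  have h0 : (0 : ℝ) ∉ Set.uIcc 1 b := Set.notMem_uIcc_of_lt one_pos (by linarith)
  rw [integral_rpow (.inr ⟨by contrapose! hq; linarith, h0⟩), one_rpow, neg_add_eq_sub]

lemma powSum_le_of_one_lt {q : ℝ} (hq : 1 < q) {n : ℕ} (hn : 1 ≤ n) :
    powSum q n ≤ q / (q - 1) := by
  have hint := integral_rpow_neg_of_ne_one hq.ne' (b := n) (by exact_mod_cast hn)
  have hpow : 0 ≤ (n : ℝ) ^ (1 - q) := by positivity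
  calc powSum q n ≤ 1 + ((n : ℝ) ^ (1 - q) - 1) / (1 - q) :=
        hint ▸ powSum_le_one_add_integral (by linarith) hn
    _ = q / (q - 1) - (n : ℝ) ^ (1 - q) / (q - 1) := by
      field_simp [show q - 1 ≠ 0 by linarith, show 1 - q ≠ 0 by linarith]; ring
    _ ≤ q / (q - 1) := sub_le_self _ (div_nonneg hpow (by linarith))

lemma powSum_le_of_lt_one {q : ℝ} (hq0 : 0 ≤ q) (hq : q < 1) {n : ℕ} (hn : 1 ≤ n) :
    powSum q n ≤ (n : ℝ) ^ (1 - q) / (1 - q) := by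
  have hint := integral_rpow_neg_of_ne_one hq.ne (b := n) (by exact_mod_cast hn)
  calc powSum q n ≤ 1 + ((n : ℝ) ^ (1 - q) - 1) / (1 - q) :=
        hint ▸ powSum_le_one_add_integral hq0 hn
    _ = (n : ℝ) ^ (1 - q) / (1 - q) - q / (1 - q) := by
      field_simp [show 1 - q ≠ 0 by linarith]; ring
    _ ≤ (n : ℝ) ^ (1 - q) / (1 - q) := sub_le_self _ (div_nonneg hq0 (by linarith))

lemma powSum_one_le {n : ℕ} (hn : 1 ≤ n) : powSum 1 n ≤ 1 + log n := by
  have hn' : (0 : ℝ) < n := by exact_mod_cast hn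
  have hint : ∫ x in (1 : ℝ)..n, x ^ (-1 : ℝ) = log n := by
    simp_rw [rpow_neg_one]
    rw [integral_inv_of_pos one_pos hn', div_one]
  exact hint ▸ powSum_le_one_add_integral zero_le_one hn

lemma sum_Icc_sub_one_rpow_neg (p : ℝ) (n : ℕ) :
    ∑ j ∈ Icc 2 (n - 1), ((j : ℝ) - 1) ^ (-p) = powSum p (n - 2) := by
  rw [powSum]
  refine sum_nbij' (· - 1) (· + 1) ?_ ?_ ?_ ?_ fun j hj => ?_
  any_goals intro j hj; simp only [mem_Icc] at hj ⊢; omega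
  rw [mem_Icc] at hj
  rw [Nat.cast_sub (by omega : 1 ≤ j), Nat.cast_one]

lemma sum_Icc_sub_rpow_neg (q : ℝ) (n : ℕ) :
    ∑ j ∈ Icc 2 (n - 1), ((n : ℝ) - j) ^ (-q) = powSum q (n - 2) := by
  rw [powSum]
  refine sum_nbij' (n - ·) (n - ·) ?_ ?_ ?_ ?_ fun j hj => ?_
  any_goals intro j hj; simp only [mem_Icc] at hj ⊢; omega
  rw [mem_Icc] at hj
  rw [Nat.cast_sub (by omega : j ≤ n)]

lemma one_div_rpow_mul_rpow_le {a b m p q : ℝ} (ha : 0 < a) (hb : 0 < b) (hm : 0 < m)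
    (hp : 0 ≤ p) (hq : 0 ≤ q) (hmab : m ≤ max a b) :
    1 / (a ^ p * b ^ q) ≤ m ^ (-q) * a ^ (-p) + m ^ (-p) * b ^ (-q) := by
  rw [one_div, mul_inv, ← rpow_neg ha.le, ← rpow_neg hb.le]
  rcases le_max_iff.1 hmab with h | h
  · have : a ^ (-p) ≤ m ^ (-p) := rpow_le_rpow_of_nonpos hm h (neg_nonpos.2 hp)
    nlinarith [rpow_nonneg hb.le (-q), rpow_nonneg ha.le (-p), rpow_nonneg hm.le (-q)]
  · have : b ^ (-q) ≤ m ^ (-q) := rpow_le_rpow_of_nonpos hm h (neg_nonpos.2 hq)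
    nlinarith [rpow_nonneg hb.le (-q), rpow_nonneg ha.le (-p), rpow_nonneg hm.le (-p)]

noncomputable def splitBound (p q : ℝ) (n : ℕ) : ℝ :=
  (n : ℝ) ^ (-q) * powSum p n + (n : ℝ) ^ (-p) * powSum q n

lemma div_three_rpow_neg_le {p q : ℝ} (hp : 0 ≤ p) {x : ℝ} (hx : 0 ≤ x) :
    (x / 3) ^ (-q) ≤ 3 ^ (p + q) * x ^ (-q) := by
  rw [div_eq_mul_inv, mul_rpow hx (by norm_num), inv_rpow (by norm_num), ← rpow_neg (by norm_num),
    neg_neg, mul_comm]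
  gcongr
  · norm_num
  · linarith

lemma sum_Icc_one_div_rpow_mul_rpow_le {p q : ℝ} (hp : 0 ≤ p) (hq : 0 ≤ q) (n : ℕ) :
    ∑ j ∈ Icc 2 (n - 1), 1 / (((j : ℝ) - 1) ^ p * ((n : ℝ) - j) ^ q) ≤
      3 ^ (p + q) * splitBound p q n := by
  have hterm : ∀ j ∈ Icc 2 (n - 1), 1 / (((j : ℝ) - 1) ^ p * ((n : ℝ) - j) ^ q) ≤
      ((n : ℝ) / 3) ^ (-q) * ((j : ℝ) - 1) ^ (-p)
        + ((n : ℝ) / 3) ^ (-p) * ((n : ℝ) - j) ^ (-q) := by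
    intro j hj
    have hj' : 2 ≤ (j : ℝ) ∧ (j : ℝ) + 1 ≤ n := by
      rw [mem_Icc] at hj; exact ⟨by exact_mod_cast hj.1, by exact_mod_cast (by omega : j + 1 ≤ n)⟩
    exact one_div_rpow_mul_rpow_le (by linarith) (by linarith) (by linarith) hp hq
      (le_max_iff.2 (by by_contra! h; linarith))
  calc _ ≤ _ := sum_le_sum hterm
    _ = ((n : ℝ) / 3) ^ (-q) * powSum p (n - 2) + ((n : ℝ) / 3) ^ (-p) * powSum q (n - 2) := by
      rw [sum_add_distrib, ← mul_sum, ← mul_sum, sum_Icc_sub_one_rpow_neg, sum_Icc_sub_rpow_neg]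
    _ ≤ 3 ^ (p + q) * (n : ℝ) ^ (-q) * powSum p n + 3 ^ (q + p) * (n : ℝ) ^ (-p) * powSum q n := by
      have := powSum_mono p (Nat.sub_le n 2)
      have := powSum_mono q (Nat.sub_le n 2)
      have := powSum_nonneg p (n - 2)
      have := powSum_nonneg q (n - 2)
      gcongr
      · exact div_three_rpow_neg_le hp (Nat.cast_nonneg n)
      · exact div_three_rpow_neg_le hq (Nat.cast_nonneg n)
    _ = 3 ^ (p + q) * splitBound p q n := by rw [splitBound, add_comm q p]; ring

lemma one_le_log_add_one {n : ℕ} (hn : 2 ≤ n) : 1 ≤ log ((n : ℝ) + 1) := by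
  have hn' : (2 : ℝ) ≤ n := by exact_mod_cast hn
  rw [le_log_iff_exp_le (by positivity)]
  linarith [exp_one_lt_d9]

section Regimes

variable {α : ℝ} {n : ℕ}

lemma splitBound_le_of_lt_two_thirds (h0 : 0 ≤ α) (h : α < 2 / 3) (hn : 1 ≤ n) :
    splitBound (3 - 3 * α) α n ≤ ((3 - 3 * α) / (2 - 3 * α) + 1 / (1 - α)) * (n : ℝ) ^ (-α) := by
  have hn' : (1 : ℝ) ≤ n := by exact_mod_cast hn
  have hp := powSum_le_of_one_lt (q := 3 - 3 * α) (by linarith) hn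
  have hq := powSum_le_of_lt_one h0 (by linarith) hn
  have hexp : (n : ℝ) ^ (-(3 - 3 * α)) * (n : ℝ) ^ (1 - α) ≤ (n : ℝ) ^ (-α) := by
    rw [← rpow_add (by linarith)]
    exact rpow_le_rpow_of_exponent_le hn' (by linarith)
  have h1α : 0 < 1 - α := by linarith
  calc splitBound (3 - 3 * α) α n
      ≤ (n : ℝ) ^ (-α) * ((3 - 3 * α) / (3 - 3 * α - 1))
        + (n : ℝ) ^ (-(3 - 3 * α)) * ((n : ℝ) ^ (1 - α) / (1 - α)) := by
        unfold splitBound; gcongr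
    _ ≤ (n : ℝ) ^ (-α) * ((3 - 3 * α) / (2 - 3 * α)) + (n : ℝ) ^ (-α) / (1 - α) := by
      rw [show (3 - 3 * α - 1) = 2 - 3 * α by ring]
      gcongr
      rw [mul_div_assoc']
      gcongr
    _ = _ := by ring

lemma splitBound_le_of_two_thirds_lt (h : 2 / 3 < α) (h1 : α < 1) (hn : 1 ≤ n) :
    splitBound (3 - 3 * α) α n ≤
      (1 / (3 * α - 2) + 1 / (1 - α)) * (n : ℝ) ^ (-(2 - 2 * α)) := by
  have hn' : (0 : ℝ) < n := by exact_mod_cast hn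
  have hp := powSum_le_of_lt_one (q := 3 - 3 * α) (by linarith) (by linarith) hn
  have hq := powSum_le_of_lt_one (q := α) (by linarith) h1 hn
  have hexp (a b : ℝ) (hab : a + b = -(2 - 2 * α)) :
      (n : ℝ) ^ a * (n : ℝ) ^ b = (n : ℝ) ^ (-(2 - 2 * α)) := by
    rw [← rpow_add hn', hab]
  calc splitBound (3 - 3 * α) α n
      ≤ (n : ℝ) ^ (-α) * ((n : ℝ) ^ (1 - (3 - 3 * α)) / (1 - (3 - 3 * α)))
        + (n : ℝ) ^ (-(3 - 3 * α)) * ((n : ℝ) ^ (1 - α) / (1 - α)) := by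
        unfold splitBound; gcongr
    _ = _ := by
      rw [mul_div_assoc', mul_div_assoc', hexp _ _ (by ring), hexp _ _ (by ring),
        show 1 - (3 - 3 * α) = 3 * α - 2 by ring]
      ring

lemma splitBound_one_two_thirds_le (hn : 2 ≤ n) :
    splitBound 1 (2 / 3) n ≤ 6 * ((n : ℝ) ^ (-(2 / 3 : ℝ)) * log ((n : ℝ) + 1)) := by
  have hn' : (0 : ℝ) < n := by positivity
  have hp := powSum_one_le (by omega : 1 ≤ n)
  have hq := powSum_le_of_lt_one (q := 2 / 3) (by norm_num) (by norm_num) (by omega : 1 ≤ n)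
  have hlog := one_le_log_add_one hn
  have hlog' : log n ≤ log ((n : ℝ) + 1) := log_le_log hn' (by linarith)
  have hexp : (n : ℝ) ^ (-1 : ℝ) * (n : ℝ) ^ (1 - 2 / 3 : ℝ) = (n : ℝ) ^ (-(2 / 3) : ℝ) := by
    rw [← rpow_add hn']; norm_num
  have hpow : 0 < (n : ℝ) ^ (-(2 / 3) : ℝ) := by positivity
  calc splitBound 1 (2 / 3) n
      ≤ (n : ℝ) ^ (-(2 / 3 : ℝ)) * (1 + log n)
        + (n : ℝ) ^ (-1 : ℝ) * ((n : ℝ) ^ (1 - 2 / 3 : ℝ) / (1 - 2 / 3)) := by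
        unfold splitBound; gcongr
    _ = (n : ℝ) ^ (-(2 / 3 : ℝ)) * (4 + log n) := by
      rw [mul_div_assoc', hexp]; ring
    _ ≤ _ := by nlinarith

end Regimes

lemma exists_splitBound_le_etaTilde {α : ℝ} (h0 : 0 < α) (h1 : α < 1) :
    ∃ C : ℝ, 0 < C ∧ ∀ n : ℕ, 3 ≤ n → splitBound (3 - 3 * α) α n ≤ C * etaTilde α n := by
  rcases lt_trichotomy α (2 / 3) with h | rfl | h
  · refine ⟨(3 - 3 * α) / (2 - 3 * α) + 1 / (1 - α),
      add_pos (div_pos (by linarith) (by linarith)) (div_pos one_pos (by linarith)), fun n hn => ?_⟩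
    rw [etaTilde, if_pos h]
    exact splitBound_le_of_lt_two_thirds h0.le h (by omega : 1 ≤ n)
  · refine ⟨6, by norm_num, fun n hn => ?_⟩
    rw [etaTilde, if_neg (lt_irrefl _), if_pos rfl, show (3 : ℝ) - 3 * (2 / 3) = 1 by norm_num]
    exact splitBound_one_two_thirds_le (by omega)
  · refine ⟨1 / (3 * α - 2) + 1 / (1 - α),
      add_pos (div_pos one_pos (by linarith)) (div_pos one_pos (by linarith)), fun n hn => ?_⟩
    rw [etaTilde, if_neg h.not_gt, if_neg h.ne']
    exact splitBound_le_of_two_thirds_lt h h1 (by omega : 1 ≤ n)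

theorem sum_bound_etaTilde (α : ℝ) (h0 : 0 < α) (h1 : α < 1) :
    ∃ C : ℝ, 0 < C ∧ ∀ n : ℕ, 3 ≤ n →
      ∑ j ∈ Finset.Icc 2 (n - 1),
        1 / (((j : ℝ) - 1) ^ (3 - 3*α) * ((n : ℝ) - j) ^ α) ≤ C * etaTilde α n := by
  obtain ⟨C, hC, hsplit⟩ := exists_splitBound_le_etaTilde h0 h1
  refine ⟨3 ^ (3 - 3 * α + α) * C, by positivity, fun n hn => ?_⟩
  calc _ ≤ 3 ^ (3 - 3 * α + α) * splitBound (3 - 3 * α) α n :=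
        sum_Icc_one_div_rpow_mul_rpow_le (by linarith) h0.le n
    _ ≤ 3 ^ (3 - 3 * α + α) * (C * etaTilde α n) := by gcongr; exact hsplit n hn
    _ = _ := by ring
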